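/- For every real number m > 0, the set of integer triples (r, l, s) ∈ ℤ³ satisfying l² − 2rs ≥ −2 and |i·l − s + r/2| ≤ m (absolute value in ℂ) is finite. -/

import Mathlib

/-- Finiteness of Mukai vectors `(r,l,s) ∈ ℤ³` with Mukai square `l² − 2rs ≥ −2`
and central charge `⟨exp(iω),(r,l,s)⟩ = i·l − s + r/2` of modulus at most `m`. -/
theorem stmt_8 (m : ℝ) (hm : 0 < m) :
    {p : ℤ × ℤ × ℤ | (p.2.1 : ℤ) ^ 2 - 2 * p.1 * p.2.2 ≥ -2 ∧
      ‖(p.2.1 : ℂ) * Complex.I - (p.2.2 : ℂ) + (p.1 : ℂ) / 2‖ ≤ m}.Finite := by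
  set N : ℤ := ⌈3 * m + 2⌉ with hN
  have hNR : 3 * m + 2 ≤ (N : ℝ) := Int.le_ceil _
  apply Set.Finite.subset (Set.finite_Icc ((-N, -N, -N) : ℤ × ℤ × ℤ) (N, N, N))
  rintro ⟨r, l, s⟩ ⟨hsq, habs⟩
  simp only [Set.mem_setOf_eq] at hsq habs
  set z : ℂ := (l : ℂ) * Complex.I - (s : ℂ) + (r : ℂ) / 2 with hz
  have him : z.im = (l : ℝ) := by simp [hz]
  have hre : z.re = -(s : ℝ) + (r : ℝ) / 2 := by simp [hz]
  have h1 : |(l : ℝ)| ≤ m := him ▸ (Complex.abs_im_le_norm z).trans habs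
  have h2 : |-(s : ℝ) + (r : ℝ) / 2| ≤ m := hre ▸ (Complex.abs_re_le_norm z).trans habs
  have h3 : ((l : ℝ)) ^ 2 - 2 * r * s ≥ -2 := by exact_mod_cast hsq
  have h1' := abs_le.mp h1
  have h2' := abs_le.mp h2
  -- bound r
  have hr : |(r : ℝ)| ≤ 3 * m + 2 := by
    rcases abs_cases (r : ℝ) with ⟨he, _⟩ | ⟨he, _⟩ <;> rw [he] <;>
      nlinarith [sq_nonneg ((r : ℝ) - (3 * m + 2)), sq_nonneg ((r : ℝ) + (3 * m + 2)),
        sq_nonneg ((l : ℝ)), sq_abs (r : ℝ), abs_nonneg (r : ℝ)]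
  have hs : |(s : ℝ)| ≤ 3 * m + 2 := by
    have := abs_le.mp hr
    rcases abs_cases (s : ℝ) with ⟨he, _⟩ | ⟨he, _⟩ <;> rw [he] <;> nlinarith
  have hl : |(l : ℝ)| ≤ 3 * m + 2 := by nlinarith
  have hr' := abs_le.mp hr
  have hs' := abs_le.mp hs
  have hl' := abs_le.mp hl
  simp only [Set.mem_Icc, Prod.le_def]
  refine ⟨⟨?_, ?_, ?_⟩, ?_, ?_, ?_⟩
  all_goals
    first
    | (have : (r : ℝ) ≤ (N : ℝ) := le_trans hr'.2 hNR; exact_mod_cast this)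
    | (have : ((-N : ℤ) : ℝ) ≤ (r : ℝ) := le_trans (by push_cast; linarith) hr'.1; exact_mod_cast this)
    | (have : (l : ℝ) ≤ (N : ℝ) := le_trans hl'.2 hNR; exact_mod_cast this)
    | (have : ((-N : ℤ) : ℝ) ≤ (l : ℝ) := le_trans (by push_cast; linarith) hl'.1; exact_mod_cast this)
    | (have : (s : ℝ) ≤ (N : ℝ) := le_trans hs'.2 hNR; exact_mod_cast this)
    | (have : ((-N : ℤ) : ℝ) ≤ (s : ℝ) := le_trans (by push_cast; linarith) hs'.1; exact_mod_cast this)
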